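/- Every torsion subgroup of GL_n(ℚ) has order at most some constant N(n) depending only on n. -/

import Mathlib

/-!
A finite subgroup `G` of `GL_n(ℚ)` preserves the lattice spanned by the `G`-orbit of the standard
basis, so it embeds into `GL_r(ℤ)` with `r ≤ n`. Reduction modulo `3` is injective on elements of
finite order of `GL_r(ℤ)` (Minkowski): if `A = 1 + 3ᵏ C` with `k ≥ 1` and `Aᵖ = 1` for a prime `p`,
the binomial expansion of `Aᵖ` forces `3 ∣ C`, so `A ≡ 1` modulo every power of `3`, i.e. `A = 1`.
Hence `|G| ≤ |GL_r(𝔽₃)| ≤ 3^(n²)`.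
-/

open Matrix Module

instance Matrix.instIsAddTorsionFree {m n α : Type*} [AddMonoid α] [IsAddTorsionFree α] :
    IsAddTorsionFree (Matrix m n α) :=
  inferInstanceAs (IsAddTorsionFree (m → n → α))

theorem exists_eq_nsmul_of_coprime_of_nsmul_eq_nsmul {M : Type*} [AddCommGroup M] {p q : ℕ}
    (hpq : p.Coprime q) {c d : M} (h : p • c = q • d) : ∃ e, c = q • e := by
  obtain ⟨u, v, huv⟩ := Nat.isCoprime_iff_coprime.2 hpq
  refine ⟨u • d + v • c, ?_⟩
  calc c = (u * p + v * q) • c := by rw [huv, one_smul]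
    _ = u • (p • c) + v • q • c := by
      rw [add_smul, mul_smul, mul_smul, natCast_zsmul, natCast_zsmul]
    _ = q • (u • d + v • c) := by rw [h, smul_add, smul_comm u q, smul_comm v q]

theorem Subgroup.eq_one_of_isOfFinOrder_of_forall_prime {G : Type*} [Group G] {K : Subgroup G}
    (hK : ∀ p : ℕ, p.Prime → ∀ y ∈ K, y ^ p = 1 → y = 1) {x : G} (hx : x ∈ K)
    (hfin : IsOfFinOrder x) : x = 1 := by
  by_contra hne
  have hp := Nat.minFac_prime (orderOf_eq_one_iff.not.2 hne)
  have hord := orderOf_pow_orderOf_div hfin.orderOf_pos.ne' (Nat.minFac_dvd (orderOf x))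
  refine hp.ne_one (hord.symm.trans (orderOf_eq_one_iff.2 ?_))
  refine hK _ hp _ (K.pow_mem hx _) ?_
  rw [← pow_mul, Nat.div_mul_cancel (Nat.minFac_dvd _), pow_orderOf_eq_one]

section Ring

variable {R : Type*} [Ring R]

theorem exists_one_add_pow_eq (x : R) (n : ℕ) : ∃ y, (1 + x) ^ n = 1 + n • x + x * x * y := by
  induction n with
  | zero => exact ⟨0, by simp⟩
  | succ n ih =>
    obtain ⟨y, hy⟩ := ih
    refine ⟨n • 1 + y + y * x, ?_⟩
    rw [pow_succ, hy, succ_nsmul]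
    noncomm_ring

theorem one_add_pow_three (x : R) : (1 + x) ^ 3 = 1 + 3 • x + x * x * (3 • 1 + x) := by
  noncomm_ring

variable [IsAddTorsionFree R]

theorem exists_eq_three_nsmul_of_one_add_pow_nsmul_pow_eq_one {p k : ℕ} (hp : p.Prime)
    (hk : k ≠ 0) {c : R} (h : (1 + 3 ^ k • c) ^ p = 1) : ∃ d, c = 3 • d := by
  obtain ⟨j, rfl⟩ := Nat.exists_eq_add_one_of_ne_zero hk
  set x := 3 ^ (j + 1) • c with hx
  have hrel : ∀ y, (1 + x) ^ p = 1 + p • x + x * x * y → p • c + 3 ^ (j + 1) • (c * c * y) = 0 := by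
    intro y hy
    rw [h, add_assoc, left_eq_add, hx, smul_mul_assoc, mul_smul_comm, smul_mul_assoc,
      smul_mul_assoc, smul_comm p, ← smul_add] at hy
    exact (smul_eq_zero.1 hy).resolve_left (by positivity)
  by_cases hp3 : p = 3
  · -- Now `p • c ∈ 3R` says nothing about `c`; the exact cube expansion yields one more factor `3`.
    subst hp3
    set w := 1 + 3 ^ j • c
    have hw : 3 • 1 + x = 3 • w := by rw [hx, smul_add, pow_succ', mul_smul]
    have h3 := hrel _ (one_add_pow_three x)
    rw [hw, mul_smul_comm, smul_comm, ← smul_add] at h3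
    refine ⟨-(3 ^ j • (c * c * w)), ?_⟩
    rw [smul_neg, smul_smul, ← pow_succ', eq_neg_iff_add_eq_zero]
    exact (smul_eq_zero.1 h3).resolve_left (by norm_num)
  · obtain ⟨y, hy⟩ := exists_one_add_pow_eq x p
    refine exists_eq_nsmul_of_coprime_of_nsmul_eq_nsmul
      ((Nat.coprime_primes hp Nat.prime_three).2 hp3) (d := -(3 ^ j • (c * c * y))) ?_
    rw [smul_neg, smul_smul, ← pow_succ', eq_neg_iff_add_eq_zero]
    exact hrel y hy

theorem exists_sub_one_eq_three_pow_nsmul {p : ℕ} (hp : p.Prime) {a : R} (ha : a ^ p = 1)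
    (h3 : ∃ c, a - 1 = 3 • c) : ∀ t : ℕ, ∃ c, a - 1 = 3 ^ t • c
  | 0 => ⟨a - 1, (one_smul _ _).symm⟩
  | 1 => by simpa using h3
  | t + 2 => by
    obtain ⟨c, hc⟩ := exists_sub_one_eq_three_pow_nsmul hp ha h3 (t + 1)
    rw [sub_eq_iff_eq_add'] at hc
    obtain ⟨d, rfl⟩ := exists_eq_three_nsmul_of_one_add_pow_nsmul_pow_eq_one hp t.succ_ne_zero
      (hc ▸ ha)
    exact ⟨d, by rw [hc, add_sub_cancel_left, smul_smul, ← pow_succ]⟩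

end Ring

namespace Matrix

variable {m n : Type*}

theorem eq_zero_of_forall_exists_eq_pow_nsmul {q : ℕ} (hq : q ≠ 1) {M : Matrix m n ℤ}
    (h : ∀ t : ℕ, ∃ C, M = q ^ t • C) : M = 0 := by
  ext i j
  by_contra hne
  obtain ⟨t, ht⟩ := (Int.finiteMultiplicity_iff (a := q)).2 ⟨by simpa using hq, hne⟩
  obtain ⟨C, rfl⟩ := h (t + 1)
  exact ht ⟨C i j, by simp⟩

theorem map_intCast_eq_zero_iff {q : ℕ} {M : Matrix m n ℤ} :
    M.map (Int.cast : ℤ → ZMod q) = 0 ↔ ∃ C, M = q • C := by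
  refine ⟨fun h => ⟨of fun i j => M i j / q, ?_⟩, ?_⟩
  · ext i j
    have := (ZMod.intCast_zmod_eq_zero_iff_dvd _ q).1 (congr_fun₂ h i j)
    simp [Int.mul_ediv_cancel' this]
  · rintro ⟨C, rfl⟩
    ext
    simp

namespace GeneralLinearGroup

variable {ι : Type*} [Fintype ι] [DecidableEq ι]

theorem map_intCast_eq_one_iff {q : ℕ} {A : GL ι ℤ} :
    map (Int.castRingHom (ZMod q)) A = 1 ↔ ∃ C, (A : Matrix ι ι ℤ) - 1 = q • C := by
  rw [← map_intCast_eq_zero_iff, Units.ext_iff, Matrix.map_sub _ Int.cast_sub,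
    Matrix.map_one _ Int.cast_zero Int.cast_one, sub_eq_zero]
  rfl

theorem eq_one_of_pow_eq_one_of_map_eq_one {p : ℕ} (hp : p.Prime) {A : GL ι ℤ} (hA : A ^ p = 1)
    (h : map (Int.castRingHom (ZMod 3)) A = 1) : A = 1 := by
  have hAp : (A : Matrix ι ι ℤ) ^ p = 1 := by rw [← Units.val_pow_eq_pow_val, hA, Units.val_one]
  refine Units.ext (sub_eq_zero.1 (eq_zero_of_forall_exists_eq_pow_nsmul (q := 3) (by norm_num) ?_))
  exact exists_sub_one_eq_three_pow_nsmul hp hAp (map_intCast_eq_one_iff.1 h)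

theorem eq_one_of_isOfFinOrder_of_map_eq_one {A : GL ι ℤ} (hA : IsOfFinOrder A)
    (h : map (Int.castRingHom (ZMod 3)) A = 1) : A = 1 :=
  Subgroup.eq_one_of_isOfFinOrder_of_forall_prime (K := (map _).ker)
    (fun _ hp _ hy hyp => eq_one_of_pow_eq_one_of_map_eq_one hp hyp hy) h hA

end GeneralLinearGroup

end Matrix

theorem Submodule.finrank_le_finrank_of_isFractionRing {R K V : Type*} [CommRing R] [IsDomain R]
    [Field K] [Algebra R K] [IsFractionRing R K] [AddCommGroup V] [Module K V] [Module R V]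
    [IsScalarTower R K V] [FiniteDimensional K V] (L : Submodule R V) [Module.Finite R L]
    [Module.Free R L] : finrank R L ≤ finrank K V := by
  let b := Module.finBasis R L
  have hli : LinearIndependent K fun i => (b i : V) :=
    (LinearIndependent.iff_fractionRing R K).1 (b.linearIndependent.map' L.subtype L.ker_subtype)
  simpa only [Fintype.card_fin] using hli.fintype_card_le_finrank

section InvariantLattice

variable {R K ι : Type*} [CommRing R] [Field K] [Algebra R K] [Fintype ι] [DecidableEq ι]
  (G : Subgroup (GL ι K))

variable (R) in
def invariantLattice : Submodule R (ι → K) :=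
  Submodule.span R (Set.range fun x : G × ι => ((x.1 : GL ι K) : Matrix ι ι K) *ᵥ Pi.single x.2 1)

theorem single_mem_invariantLattice (i : ι) : Pi.single i 1 ∈ invariantLattice R G :=
  Submodule.subset_span ⟨(1, i), by simp only [OneMemClass.coe_one, Units.val_one, one_mulVec]⟩

theorem mulVec_mem_invariantLattice {g : GL ι K} (hg : g ∈ G) {v : ι → K}
    (hv : v ∈ invariantLattice R G) : (g : Matrix ι ι K) *ᵥ v ∈ invariantLattice R G := by
  induction hv using Submodule.span_induction with
  | mem x hx =>
    obtain ⟨⟨h, i⟩, rfl⟩ := hx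
    exact Submodule.subset_span ⟨(⟨g, hg⟩ * h, i), by
      simp only [Subgroup.coe_mul, Units.val_mul, mulVec_mulVec]⟩
  | zero => simp
  | add x y _ _ hx hy => simpa [mulVec_add] using add_mem hx hy
  | smul a x _ hx => simpa [mulVec_smul] using Submodule.smul_mem _ a hx

variable (R) in
def latticeAction : G →* Module.End R (invariantLattice R G) where
  toFun g := ((mulVecLin ((g : GL ι K) : Matrix ι ι K)).restrictScalars R).restrict
    fun _ hv => mulVec_mem_invariantLattice G g.2 hv
  map_one' := by ext; simp
  map_mul' g h := LinearMap.ext fun v => Subtype.ext (mulVec_mulVec (v : ι → K) _ _).symm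

@[simp]
theorem coe_latticeAction_apply (g : G) (v : invariantLattice R G) :
    (latticeAction R G g v : ι → K) = ((g : GL ι K) : Matrix ι ι K) *ᵥ v :=
  rfl

variable (R) in
theorem latticeAction_injective : Function.Injective (latticeAction R G) := fun g h hgh => by
  refine Subtype.ext (Units.ext (ext_of_mulVec_single fun i => ?_))
  simpa using congrArg Subtype.val (LinearMap.congr_fun hgh ⟨_, single_mem_invariantLattice G i⟩)

variable [IsDomain R] [IsPrincipalIdealRing R] [IsFractionRing R K] [Finite G]

instance : Module.Finite R (invariantLattice R G) :=
  Module.Finite.span_of_finite R (Set.finite_range _)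

instance : Module.Free R (invariantLattice R G) :=
  Module.free_of_finite_type_torsion_free'

variable (R) in
theorem exists_injective_monoidHom_GL :
    ∃ r ≤ Fintype.card ι, ∃ f : G →* GL (Fin r) R, Function.Injective f := by
  let b := Module.finBasis R (invariantLattice R G)
  let f := ((LinearMap.toMatrixAlgEquiv b).toMonoidHom.comp (latticeAction R G)).toHomUnits
  refine ⟨_, ?_, f, fun g h hgh => latticeAction_injective R G ?_⟩
  · simpa using (invariantLattice R G).finrank_le_finrank_of_isFractionRing (K := K)
  · simpa [f] using congrArg Units.val hgh

end InvariantLattice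

/-- Every torsion subgroup of `GL_n(ℚ)` has order bounded by a constant depending only on `n`. -/
theorem torsion_subgroups_of_GL_rat_bounded (n : ℕ) :
    ∃ N : ℕ, ∀ G : Subgroup (GL (Fin n) ℚ),
      (∀ g ∈ G, IsOfFinOrder g) → Nat.card G ≤ N := by
  refine ⟨3 ^ (n * n), fun G hG => ?_⟩
  cases finite_or_infinite G
  · obtain ⟨r, hr, f, hf⟩ := exists_injective_monoidHom_GL ℤ G
    let φ := (GeneralLinearGroup.map (Int.castRingHom (ZMod 3))).comp f
    have hφ : Function.Injective φ := (injective_iff_map_eq_one φ).2 fun g hg => hf <| by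
      rw [map_one]
      exact GeneralLinearGroup.eq_one_of_isOfFinOrder_of_map_eq_one
        (f.isOfFinOrder (Submonoid.isOfFinOrder_coe.1 (hG g g.2))) hg
    rw [Fintype.card_fin] at hr
    calc Nat.card G ≤ Nat.card (GL (Fin r) (ZMod 3)) := Nat.card_le_card_of_injective φ hφ
      _ ≤ Nat.card (Matrix (Fin r) (Fin r) (ZMod 3)) :=
        Nat.card_le_card_of_injective _ Units.val_injective
      _ = 3 ^ (r * r) := by simp [Matrix, pow_mul]
      _ ≤ 3 ^ (n * n) := Nat.pow_le_pow_right (by norm_num) (Nat.mul_le_mul hr hr)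
  · -- `Nat.card` of an infinite type is `0`.
    simp [Nat.card_eq_zero_of_infinite]
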